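/- Decay of dyadic square-sums for piecewise-linear curves: let n ≥ 1, let i ≥ 0 be an integer, and let f : [0,1] → ℝⁿ be continuous and affine on each dyadic interval [j 2^{−i}, (j+1) 2^{−i}], 0 ≤ j ≤ 2^i − 1. Then for every integer k ≥ i, ∑_{I ∈ 𝒬^k} δ_I(f)² ≤ 2^{i−k} σ(f). -/

import Mathlib

open MeasureTheory Set Filter Topology
open scoped ENNReal

noncomputable section

/-- `δ_I(f)` for the dyadic interval `I = [j 2^{-i}, (j+1) 2^{-i}]`: the diameter of
`{f(a), f((a+b)/2), f(b)}`. -/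
def dyadDelta (n : ℕ) (f : ℝ → EuclideanSpace ℝ (Fin n)) (i j : ℕ) : ℝ :=
  Metric.diam
    ({f ((j : ℝ) / 2 ^ i), f ((2 * (j : ℝ) + 1) / 2 ^ (i + 1)), f (((j : ℝ) + 1) / 2 ^ i)} :
      Set (EuclideanSpace ℝ (Fin n)))

/-- `σ(f) = ∑_{I ∈ 𝒬} δ_I(f)²`, the dyadic square-sum of `f`, valued in `ℝ≥0∞`
(dyadic subintervals of `[0,1]` are indexed by `i ≥ 0` and `0 ≤ j < 2^i`). -/
def sigmaE (n : ℕ) (f : ℝ → EuclideanSpace ℝ (Fin n)) : ℝ≥0∞ :=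
  ∑' i : ℕ, ∑ j ∈ Finset.range (2 ^ i), ENNReal.ofReal (dyadDelta n f i j ^ 2)

lemma sum_range_mul_div (N M : ℕ) (hM : 0 < M) (g : ℕ → ℝ≥0∞) :
    ∑ j ∈ Finset.range (N * M), g (j / M) = ∑ q ∈ Finset.range N, (M : ℝ≥0∞) * g q := by
  induction N with
  | zero => simp
  | succ N ih =>
    rw [Nat.succ_mul, Finset.sum_range_add, ih, Finset.sum_range_succ]
    congr 1
    have : ∀ r ∈ Finset.range M, g ((N * M + r) / M) = g N := by
      intro r hr
      rw [mul_comm, Nat.mul_add_div hM, Nat.div_eq_of_lt (Finset.mem_range.mp hr), add_zero]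
    rw [Finset.sum_congr rfl this, Finset.sum_const, nsmul_eq_mul, Finset.card_range]

lemma key_delta {n i : ℕ} {f : ℝ → EuclideanSpace ℝ (Fin n)}
    (haff : ∀ j : ℕ, j < 2 ^ i →
      ∀ t ∈ Icc ((j : ℝ) / 2 ^ i) (((j : ℝ) + 1) / 2 ^ i),
        f t = f ((j : ℝ) / 2 ^ i) +
          (t * 2 ^ i - (j : ℝ)) • (f (((j : ℝ) + 1) / 2 ^ i) - f ((j : ℝ) / 2 ^ i)))
    (m : ℕ) (him : i ≤ m) (j : ℕ) (hj : j < 2 ^ m) :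
    dyadDelta n f m j = (2:ℝ)^i / 2^m *
      ‖f ((((j / 2^(m-i) : ℕ) : ℝ) + 1) / 2^i) - f (((j / 2^(m-i) : ℕ) : ℝ) / 2^i)‖ := by
  set d := m - i with hd
  have hm : m = i + d := (Nat.add_sub_cancel' him).symm
  set q := j / 2^d with hqdef
  have hdpos : (0:ℕ) < 2^d := pow_pos (by norm_num : (0:ℕ) < 2) d
  have hq : q < 2^i := by
    rw [hqdef, Nat.div_lt_iff_lt_mul hdpos, ← pow_add, ← hm]; exact hj
  have h1n : q * 2^d ≤ j := Nat.div_mul_le_self j (2^d)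
  have h2n : j + 1 ≤ (q+1) * 2^d := (Nat.div_lt_iff_lt_mul hdpos).mp (Nat.lt_succ_self q)
  have h2m : (2:ℝ)^m = 2^i * 2^d := by rw [hm, pow_add]
  have hipos : (0:ℝ) < 2^i := by positivity
  have hmpos : (0:ℝ) < 2^m := by positivity
  have h1r : (q:ℝ) * 2^d ≤ j := by exact_mod_cast h1n
  have h2r : (j:ℝ) + 1 ≤ ((q:ℝ)+1) * 2^d := by exact_mod_cast h2n
  set A := (j:ℝ)/2^m with hA
  set B := ((j:ℝ)+1)/2^m with hB
  set Mid := (2*(j:ℝ)+1)/2^(m+1) with hMid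
  have hAmem : A ∈ Icc ((q:ℝ)/2^i) (((q:ℝ)+1)/2^i) := by
    constructor
    · rw [hA, div_le_div_iff₀ hipos hmpos]; nlinarith
    · rw [hA, div_le_div_iff₀ hmpos hipos]; nlinarith
  have hBmem : B ∈ Icc ((q:ℝ)/2^i) (((q:ℝ)+1)/2^i) := by
    constructor
    · rw [hB, div_le_div_iff₀ hipos hmpos]; nlinarith
    · rw [hB, div_le_div_iff₀ hmpos hipos]; nlinarith
  have hMeq : Mid = (A + B) / 2 := by
    rw [hMid, hA, hB, pow_succ]; field_simp; ring
  have hMmem : Mid ∈ Icc ((q:ℝ)/2^i) (((q:ℝ)+1)/2^i) := by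
    rw [hMeq]
    constructor
    · linarith [hAmem.1, hBmem.1]
    · linarith [hAmem.2, hBmem.2]
  have fA := haff q hq A hAmem
  have fB := haff q hq B hBmem
  have fM := haff q hq Mid hMmem
  set v := f (((q:ℝ) + 1) / 2 ^ i) - f ((q:ℝ) / 2 ^ i) with hv
  have eAM : f A - f Mid = ((A - Mid) * 2^i) • v := by
    rw [fA, fM]; module
  have eAB : f A - f B = ((A - B) * 2^i) • v := by
    rw [fA, fB]; module
  have eMB : f Mid - f B = ((Mid - B) * 2^i) • v := by
    rw [fM, fB]; module
  have sAM : (A - Mid) * 2^i = -(2^i/2^(m+1)) := by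
    rw [hA, hMid, pow_succ]; field_simp; ring
  have sAB : (A - B) * 2^i = -(2^i/2^m) := by
    rw [hA, hB]; field_simp; ring
  have sMB : (Mid - B) * 2^i = -(2^i/2^(m+1)) := by
    rw [hMid, hB, pow_succ]; field_simp; ring
  have habs : |(-((2:ℝ)^i/2^(m+1)))| = 2^i/2^(m+1) := by
    rw [abs_neg, abs_of_pos (by positivity)]
  have habs2 : |(-((2:ℝ)^i/2^m))| = 2^i/2^m := by
    rw [abs_neg, abs_of_pos (by positivity)]
  have dAM : dist (f A) (f Mid) = (2^i/2^(m+1)) * ‖v‖ := by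
    rw [dist_eq_norm, eAM, norm_smul, sAM, Real.norm_eq_abs, habs]
  have dAB : dist (f A) (f B) = (2^i/2^m) * ‖v‖ := by
    rw [dist_eq_norm, eAB, norm_smul, sAB, Real.norm_eq_abs, habs2]
  have dMB : dist (f Mid) (f B) = (2^i/2^(m+1)) * ‖v‖ := by
    rw [dist_eq_norm, eMB, norm_smul, sMB, Real.norm_eq_abs, habs]
  have hle : (2:ℝ)^i/2^(m+1) * ‖v‖ ≤ 2^i/2^m * ‖v‖ := by
    gcongr
    · norm_num
    · exact Nat.le_succ m
  rw [dyadDelta, Metric.diam_triple, dAM, dAB, dMB]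
  rw [max_eq_right hle, max_eq_left hle]

/-- **Decay of dyadic square-sums for piecewise-linear curves** (Lemma B.9).
Let `f : [0,1] → ℝⁿ` be continuous and affine on each dyadic interval
`[j 2^{-i}, (j+1) 2^{-i}]`.  Then for every `k ≥ i`,
`∑_{I ∈ 𝒬^k} δ_I(f)² ≤ 2^{i−k} σ(f)`. -/
theorem sigma_decay_piecewise_linear (n : ℕ) (hn : 1 ≤ n)
    (f : ℝ → EuclideanSpace ℝ (Fin n)) (i : ℕ)
    (hcont : ContinuousOn f (Icc (0 : ℝ) 1))
    (haff : ∀ j : ℕ, j < 2 ^ i →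
      ∀ t ∈ Icc ((j : ℝ) / 2 ^ i) (((j : ℝ) + 1) / 2 ^ i),
        f t = f ((j : ℝ) / 2 ^ i) +
          (t * 2 ^ i - (j : ℝ)) • (f (((j : ℝ) + 1) / 2 ^ i) - f ((j : ℝ) / 2 ^ i))) :
    ∀ k : ℕ, i ≤ k →
      ∑ j ∈ Finset.range (2 ^ k), ENNReal.ofReal (dyadDelta n f k j ^ 2) ≤
        ((2 : ℝ≥0∞) ^ i / 2 ^ k) * sigmaE n f := by
  intro k hk
  set d := k - i with hd
  have hkd : k = i + d := (Nat.add_sub_cancel' hk).symm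
  set g : ℕ → ℝ≥0∞ := fun q =>
    ENNReal.ofReal (‖f (((q:ℝ) + 1) / 2 ^ i) - f ((q:ℝ) / 2 ^ i)‖ ^ 2) with hg
  have hstep : ∀ j ∈ Finset.range (2^k), ENNReal.ofReal (dyadDelta n f k j ^ 2) =
      ENNReal.ofReal (((2:ℝ)^i/2^k)^2) * g (j / 2^d) := by
    intro j hj
    rw [key_delta haff k hk j (Finset.mem_range.mp hj), mul_pow, hg,
      ENNReal.ofReal_mul (by positivity)]
  rw [Finset.sum_congr rfl hstep, ← Finset.mul_sum]
  have hsplit : (2:ℕ)^k = 2^i * 2^d := by rw [hkd, pow_add]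
  rw [hsplit, sum_range_mul_div _ _ (pow_pos (by norm_num : (0:ℕ) < 2) d), ← Finset.mul_sum]
  have hSi : ∑ q ∈ Finset.range (2^i), g q ≤ sigmaE n f := by
    refine le_trans (le_of_eq ?_) (ENNReal.le_tsum i)
    refine Finset.sum_congr rfl fun q hq => ?_
    rw [key_delta haff i le_rfl q (Finset.mem_range.mp hq), Nat.sub_self, pow_zero,
      Nat.div_one, div_self (by positivity : ((2:ℝ)^i) ≠ 0), one_mul]
  have hcoef : ENNReal.ofReal (((2:ℝ)^i/2^k)^2) * ((2^d : ℕ) : ℝ≥0∞) =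
      (2 : ℝ≥0∞) ^ i / 2 ^ k := by
    have h1 : ((2^d : ℕ) : ℝ≥0∞) = ENNReal.ofReal ((2:ℝ)^d) := by
      push_cast
      rw [ENNReal.ofReal_pow (by norm_num), ENNReal.ofReal_ofNat]
    have h2 : (2 : ℝ≥0∞) ^ i / 2 ^ k = ENNReal.ofReal ((2:ℝ)^i / 2^k) := by
      rw [ENNReal.ofReal_div_of_pos (by positivity), ENNReal.ofReal_pow (by norm_num),
        ENNReal.ofReal_pow (by norm_num), ENNReal.ofReal_ofNat]
    rw [h1, h2, ← ENNReal.ofReal_mul (by positivity)]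
    congr 1
    have : (2:ℝ)^k = 2^i * 2^d := by rw [hkd, pow_add]
    rw [this]
    field_simp
  calc ENNReal.ofReal (((2:ℝ)^i/2^k)^2) * (((2^d : ℕ) : ℝ≥0∞) * ∑ q ∈ Finset.range (2^i), g q)
      = (ENNReal.ofReal (((2:ℝ)^i/2^k)^2) * ((2^d : ℕ) : ℝ≥0∞)) * ∑ q ∈ Finset.range (2^i), g q := by
        ring
    _ ≤ ((2 : ℝ≥0∞) ^ i / 2 ^ k) * sigmaE n f := by
        rw [hcoef]; exact mul_le_mul_right hSi _
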